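/- arXiv:1411.4718 — 5 statements merged into one kernel-verified Lean document; each statement's English description precedes it below -/
import Mathlib

section
/- For all real numbers t, φ₀, β, the product of matrix exponentials exp(t(cos φ₀ · p₁ + sin φ₀ · p₂ + β·k)) · exp(−tβ·k) equals the 2×2 complex matrix [[A, B],[−conj(B), conj(A)]], where Re(A) = (β/√(1+β²))·sin(t√(1+β²)/2)·sin(βt/2) + cos(t√(1+β²)/2)·cos(βt/2), Im(A) = (β/√(1+β²))·sin(t√(1+β²)/2)·cos(βt/2) − cos(t√(1+β²)/2)·sin(βt/2), and B = (sin(t√(1+β²)/2)/√(1+β²))·(cos(βt/2 + φ₀) + i·sin(βt/2 + φ₀)). -/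
/-!
The exponent `X = cos φ₀ p₁ + sin φ₀ p₂ + β k` satisfies `X² = -((1 + β²)/4)`, and `k² = -1/4`.
An element `N` with `N² = -1` spans a copy of `ℂ` (with `N` playing `i`), so Euler's formula gives
`exp (ω N) = cos ω + sin ω N`; hence both factors of `γ(t)` are explicit combinations of `1`, `X`
and `k`, and multiplying the two resulting `2 × 2` matrices yields the entries `A` and `B`.
-/

open Real Matrix

/-- The basis elements of `su(2)`. -/
noncomputable def p₁ : Matrix (Fin 2) (Fin 2) ℂ := (1/2 : ℂ) • !![0, 1; -1, 0]
noncomputable def p₂ : Matrix (Fin 2) (Fin 2) ℂ := (1/2 : ℂ) • !![0, Complex.I; Complex.I, 0]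
noncomputable def k : Matrix (Fin 2) (Fin 2) ℂ := (1/2 : ℂ) • !![Complex.I, 0; 0, -Complex.I]

section NormedAlgebra

variable {𝔸 : Type*} [NormedRing 𝔸] [NormedAlgebra ℝ 𝔸]

theorem exp_smul_of_mul_self_eq_neg_one {N : 𝔸} (hN : N * N = -1) (ω : ℝ) :
    NormedSpace.exp (ω • N) = cos ω • (1 : 𝔸) + sin ω • N := by
  let _ : Algebra ℚ 𝔸 := Algebra.compHom 𝔸 (algebraMap ℚ ℝ)
  let f := Complex.liftAux N hN
  have hf : Continuous f := f.toLinearMap.continuous_of_finiteDimensional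
  calc NormedSpace.exp (ω • N) = NormedSpace.exp (f (ω * Complex.I)) := by
        simp [f, Complex.liftAux_apply]
    _ = f (NormedSpace.exp (ω * Complex.I)) := (NormedSpace.map_exp f hf _).symm
    _ = cos ω • (1 : 𝔸) + sin ω • N := by
      rw [← Complex.exp_eq_exp_ℂ, Complex.liftAux_apply, Complex.exp_ofReal_mul_I_re,
        Complex.exp_ofReal_mul_I_im, Algebra.algebraMap_eq_smul_one]

theorem exp_smul_of_mul_self_eq_neg_sq {X : 𝔸} {c : ℝ} (hc : c ≠ 0) (hX : X * X = -c ^ 2 • 1)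
    (t : ℝ) : NormedSpace.exp (t • X) = cos (c * t) • (1 : 𝔸) + (sin (c * t) / c) • X := by
  have hN : (c⁻¹ • X) * (c⁻¹ • X) = -1 := by
    rw [smul_mul_smul_comm, hX, smul_smul, show c⁻¹ * c⁻¹ * -c ^ 2 = -1 by field_simp,
      neg_one_smul]
  have ht : t • X = (c * t) • (c⁻¹ • X) := by rw [smul_smul]; field_simp
  rw [ht, exp_smul_of_mul_self_eq_neg_one hN, smul_smul, div_eq_mul_inv]

end NormedAlgebra

theorem Matrix.exp_smul_of_mul_self_eq_neg_sq {n α : Type*} [Fintype n] [DecidableEq n]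
    [NormedRing α] [NormedAlgebra ℝ α] {X : Matrix n n α} {c : ℝ} (hc : c ≠ 0)
    (hX : X * X = -c ^ 2 • 1) (t : ℝ) :
    NormedSpace.exp (t • X) = cos (c * t) • (1 : Matrix n n α) + (sin (c * t) / c) • X := by
  let _ : NormedRing (Matrix n n α) := Matrix.linftyOpNormedRing
  let _ : NormedAlgebra ℝ (Matrix n n α) := Matrix.linftyOpNormedAlgebra
  exact _root_.exp_smul_of_mul_self_eq_neg_sq hc hX t

theorem k_mul_self : k * k = -(1 / 2 : ℝ) ^ 2 • 1 := by
  rw [k, smul_mul_smul_comm, mul_fin_two, one_fin_two]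
  norm_num [Complex.ext_iff]

theorem exp_smul_k (τ : ℝ) :
    NormedSpace.exp ((τ : ℂ) • k) = !![cos (τ / 2) + sin (τ / 2) * Complex.I, 0;
      0, cos (τ / 2) - sin (τ / 2) * Complex.I] := by
  rw [Complex.coe_smul, Matrix.exp_smul_of_mul_self_eq_neg_sq (by norm_num) k_mul_self]
  ext i j
  fin_cases i <;> fin_cases j <;> simp [k, inv_mul_eq_div] <;> ring

noncomputable abbrev geodesicGenerator (φ₀ β : ℝ) : Matrix (Fin 2) (Fin 2) ℂ :=
  (cos φ₀ : ℂ) • p₁ + (sin φ₀ : ℂ) • p₂ + (β : ℂ) • k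

theorem geodesicGenerator_mul_self (φ₀ β : ℝ) :
    geodesicGenerator φ₀ β * geodesicGenerator φ₀ β = -(√(1 + β ^ 2) / 2) ^ 2 • 1 := by
  have hs : √(1 + β ^ 2) ^ 2 = 1 + β ^ 2 := Real.sq_sqrt (by positivity)
  ext i j
  fin_cases i <;> fin_cases j <;> simp [p₁, p₂, k, Matrix.mul_apply, div_pow, hs] <;>
    first
    | ring1
    | linear_combination ((β : ℂ) ^ 2 + Complex.sin φ₀ ^ 2) / 4 * Complex.I_sq -
        Complex.sin_sq_add_cos_sq (φ₀ : ℂ) / 4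

theorem exp_smul_geodesicGenerator (t φ₀ β : ℝ) :
    NormedSpace.exp ((t : ℂ) • geodesicGenerator φ₀ β) =
      !![cos (t * √(1 + β ^ 2) / 2) + β / √(1 + β ^ 2) * sin (t * √(1 + β ^ 2) / 2) * Complex.I,
        sin (t * √(1 + β ^ 2) / 2) / √(1 + β ^ 2) * (cos φ₀ + sin φ₀ * Complex.I);
        sin (t * √(1 + β ^ 2) / 2) / √(1 + β ^ 2) * (-cos φ₀ + sin φ₀ * Complex.I),
        cos (t * √(1 + β ^ 2) / 2) - β / √(1 + β ^ 2) * sin (t * √(1 + β ^ 2) / 2) * Complex.I] := by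
  have hs : √(1 + β ^ 2) ≠ 0 := by positivity
  rw [Complex.coe_smul,
    Matrix.exp_smul_of_mul_self_eq_neg_sq (by positivity) (geodesicGenerator_mul_self φ₀ β)]
  ext i j
  fin_cases i <;> fin_cases j <;> simp [p₁, p₂, k, sub_eq_add_neg] <;> field_simp

/-- The explicit entries of the sub-Riemannian geodesic
`γ(t) = exp(t(cos φ₀ p₁ + sin φ₀ p₂ + β k)) · exp(−tβ k)` through the unit of `SU(2)`. -/
theorem su2_geodesic_entries (t φ₀ β : ℝ) (A B : ℂ)
    (hAre : A.re = β / Real.sqrt (1 + β^2) * Real.sin (t * Real.sqrt (1 + β^2) / 2) *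
        Real.sin (β * t / 2) +
      Real.cos (t * Real.sqrt (1 + β^2) / 2) * Real.cos (β * t / 2))
    (hAim : A.im = β / Real.sqrt (1 + β^2) * Real.sin (t * Real.sqrt (1 + β^2) / 2) *
        Real.cos (β * t / 2) -
      Real.cos (t * Real.sqrt (1 + β^2) / 2) * Real.sin (β * t / 2))
    (hB : B = (Real.sin (t * Real.sqrt (1 + β^2) / 2) / Real.sqrt (1 + β^2) : ℝ) *
      ((Real.cos (β * t / 2 + φ₀) : ℂ) + Complex.I * (Real.sin (β * t / 2 + φ₀) : ℂ))) :
    NormedSpace.exp ((t : ℂ) • ((Real.cos φ₀ : ℂ) • p₁ + (Real.sin φ₀ : ℂ) • p₂ + (β : ℂ) • k)) *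
      NormedSpace.exp ((-(t * β) : ℂ) • k) =
    !![A, B; -(starRingEnd ℂ) B, (starRingEnd ℂ) A] := by
  rw [exp_smul_geodesicGenerator, show (-(t * β) : ℂ) = ((-(β * t) : ℝ) : ℂ) by push_cast; ring,
    exp_smul_k]
  ext i j
  fin_cases i <;> fin_cases j <;>
    simp [Complex.ext_iff, hAre, hAim, hB, cos_add, sin_add, neg_div, -Complex.ofReal_cos,
      -Complex.ofReal_sin] <;> constructor <;> ring
end

section
/- For all real numbers φ₀ and β, setting t₀ = 2π/√(1+β²), the matrix exp(t₀(cos φ₀ · p₁ + sin φ₀ · p₂ + β·k)) · exp(−t₀β·k) equals the diagonal matrix [[A, 0],[0, conj(A)]] with A = −cos(πβ/√(1+β²)) + i·sin(πβ/√(1+β²)); in particular this matrix does not depend on φ₀. -/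
open Real Matrix

/-! The generator `X = cos φ₀ • p₁ + sin φ₀ • p₂ + β • k` satisfies `X * X = -((1 + β²)/4) • 1`,
so the exponential series of `t • X` splits into a cosine part and a sine part, exactly as for
`exp (i t)`. At `t₀ = 2π/√(1+β²)` the angle is `π`, hence `exp (t₀ • X) = -1` for every `φ₀`, and
the second factor `exp (-(t₀β) • k)` is diagonal with entries `exp (∓ i πβ/√(1+β²))`. -/

open NormedSpace

theorem NormedSpace.exp_eq_cos_add_sin_div_smul_of_mul_self_eq {𝔸 : Type*} [NormedRing 𝔸]
    [NormedAlgebra ℂ 𝔸] [CompleteSpace 𝔸] {x : 𝔸} {c : ℂ} (hc : c ≠ 0)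
    (hx : x * x = -(c ^ 2) • 1) :
    exp x = Complex.cos c • (1 : 𝔸) + (Complex.sin c / c) • x := by
  have hx_even (n : ℕ) : x ^ (2 * n) = ((-1) ^ n * c ^ (2 * n)) • (1 : 𝔸) := by
    rw [pow_mul, sq, hx, smul_pow, one_pow, neg_pow, pow_mul]
  refine ((HasSum.even_add_odd ?_ ?_).unique (exp_series_hasSum_exp' (𝕂 := ℂ) x)).symm
  · convert (Complex.hasSum_cos c).smul_const (1 : 𝔸) using 2 with n
    rw [hx_even, smul_smul, div_eq_inv_mul]
  · convert ((Complex.hasSum_sin c).div_const c).smul_const x using 2 with n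
    rw [pow_succ, hx_even, smul_mul_assoc, one_mul, smul_smul, pow_succ]
    congr 1
    field_simp

theorem NormedSpace.exp_eq_neg_one_of_mul_self_eq {𝔸 : Type*} [NormedRing 𝔸]
    [NormedAlgebra ℂ 𝔸] [CompleteSpace 𝔸] {x : 𝔸} (hx : x * x = -((π : ℂ) ^ 2) • 1) :
    exp x = -1 := by
  rw [exp_eq_cos_add_sin_div_smul_of_mul_self_eq (Complex.ofReal_ne_zero.mpr pi_ne_zero) hx,
    Complex.cos_pi, Complex.sin_pi]
  simp

theorem su2_mul_self (a b c : ℂ) :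
    (a • p₁ + b • p₂ + c • k) * (a • p₁ + b • p₂ + c • k) =
      -((a ^ 2 + b ^ 2 + c ^ 2) / 4) • 1 := by
  ext i j
  fin_cases i <;> fin_cases j <;> simp [p₁, p₂, k, Matrix.mul_apply, Fin.sum_univ_two] <;>
    ring_nf <;> simp only [Complex.I_sq] <;> ring

theorem exp_smul_k_s1 (z : ℂ) :
    exp (z • k) =
      !![Complex.exp (z * Complex.I / 2), 0; 0, Complex.exp (-(z * Complex.I / 2))] := by
  have h_diag : z • k = diagonal ![z * Complex.I / 2, -(z * Complex.I / 2)] := by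
    ext i j
    fin_cases i <;> fin_cases j <;> simp [k] <;> ring
  rw [h_diag, exp_diagonal, Pi.exp_def]
  ext i j
  fin_cases i <;> fin_cases j <;> simp [Complex.exp_eq_exp_ℂ]

/-- At time `t₀ = 2π/√(1+β²)`, the sub-Riemannian geodesic of `SU(2)` through the unit
is the diagonal matrix `[[A,0],[0,conj A]]` with
`A = −cos(πβ/√(1+β²)) + i·sin(πβ/√(1+β²))`; in particular it does not depend on `φ₀`. -/
theorem su2_geodesic_at_conjugate_time (φ₀ β : ℝ) (t₀ : ℝ) (A : ℂ)
    (ht₀ : t₀ = 2 * Real.pi / Real.sqrt (1 + β^2))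
    (hA : A = -(Real.cos (Real.pi * β / Real.sqrt (1 + β^2)) : ℂ) +
      Complex.I * (Real.sin (Real.pi * β / Real.sqrt (1 + β^2)) : ℂ)) :
    NormedSpace.exp
        ((t₀ : ℂ) • ((Real.cos φ₀ : ℂ) • p₁ + (Real.sin φ₀ : ℂ) • p₂ + (β : ℂ) • k)) *
      NormedSpace.exp ((-(t₀ * β) : ℂ) • k) =
    !![A, 0; 0, (starRingEnd ℂ) A] := by
  have hs_sq : √(1 + β ^ 2) ^ 2 = 1 + β ^ 2 := sq_sqrt (by positivity)
  set X := (Real.cos φ₀ : ℂ) • p₁ + (Real.sin φ₀ : ℂ) • p₂ + (β : ℂ) • k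
  have h_sq : (t₀ : ℂ) • X * (t₀ : ℂ) • X = -((π : ℂ) ^ 2) • 1 := by
    have h_real : t₀ * t₀ * -((cos φ₀ ^ 2 + sin φ₀ ^ 2 + β ^ 2) / 4) = -π ^ 2 := by
      rw [cos_sq_add_sin_sq, ht₀]
      field_simp
      rw [hs_sq]
      ring
    rw [smul_mul_smul, su2_mul_self, smul_smul]
    exact_mod_cast congrArg (· • (1 : Matrix (Fin 2) (Fin 2) ℂ)) h_real
  have h_exp : exp ((t₀ : ℂ) • X) = -1 := by
    open scoped Norms.Operator in exact exp_eq_neg_one_of_mul_self_eq h_sq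
  have h_half : -(t₀ * β : ℂ) * Complex.I / 2 = -((π * β / √(1 + β ^ 2) : ℝ) * Complex.I) := by
    rw [ht₀]
    push_cast
    field_simp
  generalize π * β / √(1 + β ^ 2) = θ at hA h_half
  rw [h_exp, exp_smul_k_s1, h_half, neg_one_mul, hA]
  ext i j
  fin_cases i <;> fin_cases j <;>
    simp [Complex.ext_iff, Complex.exp_re, Complex.exp_im, Complex.cos_ofReal_re,
      Complex.sin_ofReal_re]
end

section
/- Let a ∈ (0,1) and define F₁(β) = −(β/√(1+β²))·arcsin√((1−a²)(1+β²)) + arcsin(β·√(1−a²)/a) for β ∈ [−a/√(1−a²), a/√(1−a²)]. Then: (1) F₁ is an odd function; (2) F₁ is strictly increasing on its whole domain; (3) the range of F₁ is the segment [(π/2)(a−1), (π/2)(1−a)]. -/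
open Real Set

/-!
Oddness is immediate from the oddness of `arcsin`. With `θ = arcsin √((1 - a²)(1 + β²))`,
a direct computation gives `F₁' β = (tan θ - θ) / (1 + β²)^(3/2)`, which is positive on the
interior of the domain because `0 < θ < π/2` there. So `F₁` is strictly increasing, and by
continuity its image is the interval between its endpoint values; at `β = a / √(1 - a²)` both
arcsin arguments equal `1` and the prefactor equals `a`, giving `(π/2)(1 - a)`.
-/

/-- The argument function `F₁(β)` in the short-time case. -/
noncomputable def F₁ (a β : ℝ) : ℝ :=
  -(β / Real.sqrt (1 + β^2)) * Real.arcsin (Real.sqrt ((1 - a^2) * (1 + β^2))) +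
    Real.arcsin (β * Real.sqrt (1 - a^2) / a)

theorem F₁_neg (a β : ℝ) : F₁ a (-β) = -F₁ a β := by
  simp only [F₁, neg_sq, neg_mul, neg_div, arcsin_neg]
  ring

theorem continuous_F₁ (a : ℝ) : Continuous (F₁ a) := by
  unfold F₁
  fun_prop (disch := exact fun x => (sqrt_pos.2 (by positivity)).ne')

theorem HasDerivAt.arcsin {f : ℝ → ℝ} {f' x : ℝ} (hf : HasDerivAt f f' x) (h : |f x| < 1) :
    HasDerivAt (fun y => arcsin (f y)) (f' / √(1 - f x ^ 2)) x := by
  obtain ⟨h₁, h₂⟩ := abs_lt.1 h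
  exact ((hasDerivAt_arcsin h₁.ne' h₂.ne).comp x hf).congr_deriv (one_div_mul_eq_div _ _)

theorem hasDerivAt_div_sqrt_one_add_sq (x : ℝ) :
    HasDerivAt (fun x => x / √(1 + x ^ 2)) (1 / √(1 + x ^ 2) ^ 3) x := by
  have hpos : 0 < 1 + x ^ 2 := by positivity
  have hS := sqrt_pos.2 hpos
  refine ((hasDerivAt_id' x).div (((hasDerivAt_pow 2 x).const_add 1).sqrt hpos.ne')
    hS.ne').congr_deriv ?_
  field_simp
  rw [sq_sqrt hpos.le]
  ring

theorem hasDerivAt_F₁ {a β : ℝ} (ha₀ : 0 < a) (ha₁ : a < 1) (hβ : (1 - a ^ 2) * β ^ 2 < a ^ 2) :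
    HasDerivAt (F₁ a)
      ((tan (arcsin √((1 - a ^ 2) * (1 + β ^ 2))) - arcsin √((1 - a ^ 2) * (1 + β ^ 2))) /
        √(1 + β ^ 2) ^ 3) β := by
  have hk : 0 < 1 - a ^ 2 := by nlinarith
  have hS2 : √(1 + β ^ 2) ^ 2 = 1 + β ^ 2 := sq_sqrt (by positivity)
  have hc2 : √(1 - a ^ 2) ^ 2 = 1 - a ^ 2 := sq_sqrt hk.le
  have hw : √((1 - a ^ 2) * (1 + β ^ 2)) = √(1 - a ^ 2) * √(1 + β ^ 2) := sqrt_mul hk.le _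
  set c := √(1 - a ^ 2)
  set S := √(1 + β ^ 2)
  have hc : 0 < c := sqrt_pos.2 hk
  have hS : 0 < S := sqrt_pos.2 (by positivity)
  -- both arcsin arguments have the same defect from 1, up to the factor a²
  have hq : 1 - (c * S) ^ 2 = a ^ 2 - (1 - a ^ 2) * β ^ 2 := by
    rw [mul_pow, hc2, hS2]; ring
  have hq' : 1 - (β * c / a) ^ 2 = (1 - (c * S) ^ 2) / a ^ 2 := by
    rw [hq, div_pow, mul_pow, hc2]; field_simp
  have hqpos : 0 < 1 - (c * S) ^ 2 := by rw [hq]; linarith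
  have hwlt : |c * S| < 1 := by
    rw [← sq_lt_one_iff_abs_lt_one]; linarith
  have hvlt : |β * c / a| < 1 := by
    rw [← sq_lt_one_iff_abs_lt_one, ← sub_pos, hq']; positivity
  have hinner : HasDerivAt (fun x => √((1 - a ^ 2) * (1 + x ^ 2)))
      ((1 - a ^ 2) * (2 * β) / (2 * (c * S))) β := by
    have := (((hasDerivAt_pow 2 β).const_add 1).const_mul (1 - a ^ 2)).sqrt (by positivity)
    simpa [hw] using this
  have h := ((hasDerivAt_div_sqrt_one_add_sq β).mul (hinner.arcsin (by rwa [hw]))).neg.add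
    ((((hasDerivAt_id' β).mul_const c).div_const a).arcsin hvlt)
  refine (h.congr_of_eventuallyEq (Filter.Eventually.of_forall fun x => ?_)).congr_deriv ?_
  · simp only [F₁, Pi.add_apply, Pi.neg_apply, Pi.mul_apply, c]; ring
  · rw [hw, tan_arcsin, hq', sqrt_div hqpos.le, sqrt_sq ha₀.le]
    field_simp
    rw [show √(1 + β ^ 2) = S from rfl]
    linear_combination (β ^ 2 * S ^ 4 / √(1 - c ^ 2 * S ^ 2)) * hc2 +
      (c ^ 2 * S ^ 4 / √(1 - c ^ 2 * S ^ 2)) * hS2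

theorem strictMonoOn_F₁ {a : ℝ} (ha₀ : 0 < a) (ha₁ : a < 1) :
    StrictMonoOn (F₁ a) (Icc (-(a / √(1 - a ^ 2))) (a / √(1 - a ^ 2))) := by
  have hk : 0 < 1 - a ^ 2 := by nlinarith
  refine strictMonoOn_of_deriv_pos (convex_Icc _ _) (continuous_F₁ a).continuousOn ?_
  intro β hβ
  obtain ⟨hβ₁, hβ₂⟩ := interior_Icc (a := -(a / √(1 - a ^ 2))) ▸ hβ
  have hβ : (1 - a ^ 2) * β ^ 2 < a ^ 2 := by
    have : β ^ 2 < (a / √(1 - a ^ 2)) ^ 2 := by nlinarith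
    rwa [div_pow, sq_sqrt hk.le, lt_div_iff₀ hk, mul_comm] at this
  have hw₀ : 0 < √((1 - a ^ 2) * (1 + β ^ 2)) := sqrt_pos.2 (by positivity)
  have hw₁ : √((1 - a ^ 2) * (1 + β ^ 2)) < 1 := by
    rw [sqrt_lt' one_pos]; linarith
  rw [(hasDerivAt_F₁ ha₀ ha₁ hβ).deriv]
  exact div_pos (sub_pos.2 (lt_tan (arcsin_pos.2 hw₀) (arcsin_lt_pi_div_two.2 hw₁)))
    (by positivity)

theorem F₁_div_sqrt_one_sub_sq {a : ℝ} (ha₀ : 0 < a) (ha₁ : a < 1) :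
    F₁ a (a / √(1 - a ^ 2)) = π / 2 * (1 - a) := by
  have hk : 0 < 1 - a ^ 2 := by nlinarith
  have hc2 : √(1 - a ^ 2) ^ 2 = 1 - a ^ 2 := sq_sqrt hk.le
  have hc : 0 < √(1 - a ^ 2) := sqrt_pos.2 hk
  have h₁ : 1 + (a / √(1 - a ^ 2)) ^ 2 = (1 / √(1 - a ^ 2)) ^ 2 := by
    field_simp; linear_combination hc2
  have h₂ : (1 - a ^ 2) * (1 / √(1 - a ^ 2)) ^ 2 = 1 := by
    field_simp; linear_combination -hc2
  have h₃ : a / √(1 - a ^ 2) / (1 / √(1 - a ^ 2)) = a := by field_simp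
  have h₄ : a / √(1 - a ^ 2) * √(1 - a ^ 2) / a = 1 := by field_simp
  rw [F₁, h₁, sqrt_sq (by positivity), h₂, sqrt_one, h₃, h₄, arcsin_one]
  ring

/-- `F₁` is odd, strictly increasing on its domain `[−a/√(1−a²), a/√(1−a²)]`, with range
`[(π/2)(a−1), (π/2)(1−a)]`. -/
theorem F₁_properties (a : ℝ) (ha : a ∈ Set.Ioo (0:ℝ) 1) :
    (∀ β : ℝ, F₁ a (-β) = -(F₁ a β)) ∧
    StrictMonoOn (F₁ a) (Set.Icc (-(a / Real.sqrt (1 - a^2))) (a / Real.sqrt (1 - a^2))) ∧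
    F₁ a '' Set.Icc (-(a / Real.sqrt (1 - a^2))) (a / Real.sqrt (1 - a^2)) =
      Set.Icc (Real.pi / 2 * (a - 1)) (Real.pi / 2 * (1 - a)) := by
  obtain ⟨ha₀, ha₁⟩ := ha
  have hmono := strictMonoOn_F₁ ha₀ ha₁
  refine ⟨F₁_neg a, hmono, ?_⟩
  have hb : 0 ≤ a / √(1 - a ^ 2) := by positivity
  rw [(continuous_F₁ a).continuousOn.image_Icc_of_monotoneOn (by linarith) hmono.monotoneOn,
    F₁_neg, F₁_div_sqrt_one_sub_sq ha₀ ha₁, neg_mul_eq_mul_neg, neg_sub]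
end

section
/- Define F(β) = πβ/√(1+β²) for β ∈ ℝ. If β₁, β₂ are real numbers with |F(β₁) − F(β₂)| = π and cos(F(β₁)) < 0, then |β₁| > |β₂|, and consequently 2π/√(1+β₁²) < 2π/√(1+β₂²). -/
open Real

/-!
`F(β) = π · β/√(1+β²)` with `β ↦ β/√(1+β²)` odd, strictly increasing and of modulus `< 1`, so
`|F β|` is a strictly increasing function of `|β|` with values in `[0, π)`. From `cos (F β₁) < 0`
we get `|F β₁| > π/2`; since `F β₂ = F β₁ ∓ π` also lies in `(-π, π)`, it has modulus
`π - |F β₁| < π/2 < |F β₁|`, hence `|β₂| < |β₁|`.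
-/

lemma abs_div_sqrt_one_add_sq (t : ℝ) : |t / √(1 + t ^ 2)| = |t| / √(1 + |t| ^ 2) := by
  rw [abs_div, sq_abs, abs_of_nonneg (sqrt_nonneg _)]

lemma abs_div_sqrt_one_add_sq_lt_one (t : ℝ) : |t / √(1 + t ^ 2)| < 1 := by
  rw [abs_div, abs_of_nonneg (sqrt_nonneg _), div_lt_one (by positivity), ← sqrt_sq_eq_abs t]
  exact sqrt_lt_sqrt (sq_nonneg t) (lt_one_add _)

lemma strictMonoOn_div_sqrt_one_add_sq :
    StrictMonoOn (fun t : ℝ => t / √(1 + t ^ 2)) (Set.Ici 0) := by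
  intro s (hs : 0 ≤ s) t (ht : 0 ≤ t) hst
  have hsq : s ^ 2 < t ^ 2 := pow_lt_pow_left₀ hst hs two_ne_zero
  show s / √(1 + s ^ 2) < t / √(1 + t ^ 2)
  rw [div_lt_div_iff₀ (by positivity) (by positivity)]
  calc s * √(1 + t ^ 2) = √(s ^ 2 * (1 + t ^ 2)) := by rw [sqrt_mul' _ (by positivity), sqrt_sq hs]
    _ < √(t ^ 2 * (1 + s ^ 2)) := sqrt_lt_sqrt (by positivity) (by nlinarith)
    _ = t * √(1 + s ^ 2) := by rw [sqrt_mul' _ (by positivity), sqrt_sq ht]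

lemma pi_div_two_lt_abs_of_cos_neg {x : ℝ} (hx : cos x < 0) : π / 2 < |x| := by
  by_contra! h
  exact hx.not_ge (cos_nonneg_of_mem_Icc ⟨neg_le_of_abs_le h, le_of_abs_le h⟩)

lemma abs_lt_abs_of_abs_sub_eq_pi {x y : ℝ} (hxy : |x - y| = π) (hy : |y| < π)
    (hx : π / 2 < |x|) : |y| < |x| := by
  rcases abs_cases (x - y) with ⟨e, _⟩ | ⟨e, _⟩ <;>
    rcases abs_cases x with ⟨a1, b1⟩ | ⟨a1, b1⟩ <;>
    rcases abs_cases y with ⟨a2, b2⟩ | ⟨a2, b2⟩ <;>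
    rw [hxy] at e <;> linarith

/-- If `F(β) = πβ/√(1+β²)`, `|F(β₁) − F(β₂)| = π` and `cos(F(β₁)) < 0`, then
`|β₁| > |β₂|` and `2π/√(1+β₁²) < 2π/√(1+β₂²)`. -/
theorem beta_comparison (β₁ β₂ : ℝ) (F : ℝ → ℝ)
    (hF : ∀ β : ℝ, F β = Real.pi * β / Real.sqrt (1 + β^2))
    (hdiff : |F β₁ - F β₂| = Real.pi) (hcos : Real.cos (F β₁) < 0) :
    |β₁| > |β₂| ∧
    2 * Real.pi / Real.sqrt (1 + β₁^2) < 2 * Real.pi / Real.sqrt (1 + β₂^2) := by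
  have habsF (β : ℝ) : |F β| = π * |β / √(1 + β ^ 2)| := by
    rw [hF, mul_div_assoc, abs_mul, abs_of_pos pi_pos]
  have hF₂ : |F β₂| < π := by
    simpa [habsF] using mul_lt_mul_of_pos_left (abs_div_sqrt_one_add_sq_lt_one β₂) pi_pos
  have hF₂₁ : |F β₂| < |F β₁| :=
    abs_lt_abs_of_abs_sub_eq_pi hdiff hF₂ (pi_div_two_lt_abs_of_cos_neg hcos)
  rw [habsF, habsF, mul_lt_mul_iff_right₀ pi_pos, abs_div_sqrt_one_add_sq,
    abs_div_sqrt_one_add_sq] at hF₂₁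
  have hβ : |β₂| < |β₁| :=
    (strictMonoOn_div_sqrt_one_add_sq.lt_iff_lt (abs_nonneg β₂) (abs_nonneg β₁)).1 hF₂₁
  refine ⟨hβ, div_lt_div_of_pos_left (by positivity) (by positivity) ?_⟩
  exact sqrt_lt_sqrt (by positivity) (add_lt_add_right (sq_lt_sq.2 hβ) 1)
end

section
/- Let M be a real 3×3 matrix with MᵀM = I, det M = 1, and M ≠ I. Then M² = I if and only if there exist real numbers a₂, b₁, b₂ with a₂² + b₁² + b₂² = 1 such that M = [[a₂²−b₁²−b₂², 2a₂b₁, 2a₂b₂], [2a₂b₁, −a₂²+b₁²−b₂², 2b₁b₂], [2a₂b₂, 2b₂b₁, −a₂²−b₁²+b₂²]]. -/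
/-!
Since `M² = 1 = MᵀM`, the matrix `M` is symmetric, and `det M = 1` gives `adj M = Mᵀ = M`.
In dimension three Cayley–Hamilton reads `adj A = A² - (tr A) A + tr (adj A)`, which for `M`
becomes `(1 + tr M)(M - 1) = 0`; as `M ≠ 1`, `tr M = -1`. So `P = (M + 1)/2` is a symmetric
idempotent of trace one, and the same identity shows `adj P = 0`: all `2 × 2` minors of `P`
vanish. Normalizing a nonzero column of `P` then gives a unit vector `v` with `P = v vᵀ`, i.e.
`M = 2 v vᵀ - 1` is the half-turn about `v`, whose entries are those of the displayed matrix.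
Conversely `(2 v vᵀ - 1)² = 1` whenever `vᵀv = 1`.
-/

open Matrix

namespace Matrix

section CommRing

variable {R : Type*} [CommRing R] {n : Type*} [Fintype n] [DecidableEq n]

def halfTurn (v : n → R) : Matrix n n R :=
  2 • vecMulVec v v - 1

theorem halfTurn_sq {v : n → R} (hv : v ⬝ᵥ v = 1) : halfTurn v ^ 2 = 1 := by
  have hproj : vecMulVec v v * vecMulVec v v = vecMulVec v v := by
    rw [vecMulVec_mul_vecMulVec, hv, one_smul]
  simp only [halfTurn, sq, sub_mul, mul_sub, smul_mul_smul_comm, hproj, mul_one, one_mul,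
    mul_smul]
  module

theorem halfTurn_fin_three {x y z : R} (h : x ^ 2 + y ^ 2 + z ^ 2 = 1) :
    halfTurn ![x, y, z] = !![x^2 - y^2 - z^2, 2*x*y, 2*x*z;
                             2*x*y, -x^2 + y^2 - z^2, 2*y*z;
                             2*x*z, 2*z*y, -x^2 - y^2 + z^2] := by
  ext i j
  fin_cases i <;> fin_cases j <;> simp [halfTurn] <;> first | linear_combination h | ring

theorem adjugate_eq_transpose_of_transpose_mul_self_eq_one {M : Matrix n n R}
    (horth : Mᵀ * M = 1) (hdet : M.det = 1) : adjugate M = Mᵀ :=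
  calc adjugate M = adjugate M * M * Mᵀ := by rw [mul_assoc, mul_eq_one_comm.1 horth, mul_one]
    _ = Mᵀ := by rw [adjugate_mul, hdet, one_smul, one_mul]

theorem adjugate_fin_three_eq (A : Matrix (Fin 3) (Fin 3) R) :
    adjugate A = A ^ 2 - trace A • A + trace (adjugate A) • 1 := by
  ext i j
  fin_cases i <;> fin_cases j <;>
    simp [adjugate_fin_three, sq, mul_apply, Fin.sum_univ_three, trace_fin_three] <;> ring

theorem mul_eq_mul_of_adjugate_eq_zero {A : Matrix (Fin 3) (Fin 3) R} (h : adjugate A = 0)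
    (i j k : Fin 3) : A i j * A j k = A i k * A j j := by
  rw [adjugate_fin_three, ← Matrix.ext_iff] at h
  simp only [Fin.isValue, of_apply, cons_val', cons_val_fin_one, zero_apply, Fin.forall_fin_succ,
    cons_val_zero, cons_val_succ, forall_const, sub_eq_zero, neg_add_eq_zero] at h
  fin_cases i <;> fin_cases j <;> fin_cases k <;> grind

theorem trace_eq_neg_one_of_sq_eq_one [IsDomain R] {M : Matrix (Fin 3) (Fin 3) R}
    (horth : Mᵀ * M = 1) (hdet : M.det = 1) (hsq : M ^ 2 = 1) (hne : M ≠ 1) :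
    trace M = -1 := by
  have hsymm : Mᵀ = M := left_inv_eq_right_inv horth (by rwa [sq] at hsq)
  have hadj : adjugate M = M :=
    (adjugate_eq_transpose_of_transpose_mul_self_eq_one horth hdet).trans hsymm
  have key := adjugate_fin_three_eq M
  rw [hadj, hsq] at key
  have hfactor : (1 + trace M) • (M - 1) = 0 := by linear_combination (norm := module) key
  rcases smul_eq_zero.1 hfactor with h | h
  · exact eq_neg_of_add_eq_zero_right h
  · exact absurd (sub_eq_zero.1 h) hne

theorem adjugate_eq_zero_of_isIdempotentElem [IsDomain R] [CharZero R]
    {P : Matrix (Fin 3) (Fin 3) R} (hP : IsIdempotentElem P) (htr : trace P = 1) :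
    adjugate P = 0 := by
  have key := adjugate_fin_three_eq P
  rw [sq, hP.eq, htr, one_smul, sub_self, zero_add] at key
  have htwice : trace (adjugate P) * 2 = 0 := by
    have htr_adj := congrArg trace key
    rw [trace_smul, trace_one, Fintype.card_fin, Nat.cast_ofNat, smul_eq_mul] at htr_adj
    linear_combination -htr_adj
  rw [key, (mul_eq_zero.1 htwice).resolve_right two_ne_zero, zero_smul]

end CommRing

theorem exists_eq_vecMulVec_of_isIdempotentElem {n : Type*} [Fintype n] {P : Matrix n n ℝ}
    (hsymm : P.IsSymm) (hP : IsIdempotentElem P)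
    (hminor : ∀ i j k, P i j * P j k = P i k * P j j) (htr : trace P ≠ 0) :
    ∃ v : n → ℝ, v ⬝ᵥ v = 1 ∧ P = vecMulVec v v := by
  have hdiag : ∀ j, P j j = ∑ k, P k j ^ 2 := fun j => by
    conv_lhs => rw [← hP.eq]
    simp [mul_apply, sq, hsymm.apply]
  obtain ⟨j, hj⟩ : ∃ j, P j j ≠ 0 := by
    by_contra! h
    exact htr (Finset.sum_eq_zero fun j _ => h j)
  have hpos : 0 < P j j := (hdiag j ▸ Finset.sum_nonneg fun _ _ => sq_nonneg _).lt_of_ne' hj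
  refine ⟨fun i => P i j / √(P j j), ?_, ?_⟩
  · simp [dotProduct, ← sq, div_pow, Real.sq_sqrt hpos.le, ← Finset.sum_div, ← hdiag, hj]
  · ext i k
    rw [vecMulVec_apply, div_mul_div_comm, Real.mul_self_sqrt hpos.le, eq_div_iff hj,
      hsymm.apply j k, hminor]

theorem exists_eq_halfTurn_of_sq_eq_one {M : Matrix (Fin 3) (Fin 3) ℝ}
    (horth : Mᵀ * M = 1) (hdet : M.det = 1) (hsq : M ^ 2 = 1) (hne : M ≠ 1) :
    ∃ v : Fin 3 → ℝ, v ⬝ᵥ v = 1 ∧ M = halfTurn v := by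
  have hMM : M * M = 1 := by rwa [sq] at hsq
  have hsymm : Mᵀ = M := left_inv_eq_right_inv horth hMM
  have htr := trace_eq_neg_one_of_sq_eq_one horth hdet hsq hne
  set P := (2 : ℝ)⁻¹ • (M + 1) with hP
  have hPsymm : P.IsSymm := by
    rw [IsSymm, hP, transpose_smul, transpose_add, transpose_one, hsymm]
  have hPidem : IsIdempotentElem P := by
    simp only [IsIdempotentElem, hP, smul_mul_smul_comm, add_mul, mul_add, hMM, mul_one, one_mul]
    module
  have hPtr : trace P = 1 := by
    rw [hP, trace_smul, trace_add, htr, trace_one, Fintype.card_fin]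
    norm_num
  obtain ⟨v, hv, hPv⟩ := exists_eq_vecMulVec_of_isIdempotentElem hPsymm hPidem
    (mul_eq_mul_of_adjugate_eq_zero (adjugate_eq_zero_of_isIdempotentElem hPidem hPtr))
    (hPtr ▸ one_ne_zero)
  refine ⟨v, hv, ?_⟩
  rw [halfTurn, ← hPv, hP]
  module

end Matrix

/-- A nonidentity element of `SO(3)` is an involution iff it lies in the parametrized
family `Ω(A,B)` with `Re A = 0`, i.e. the stratum `K^{sym}` of the cut locus. -/
theorem so3_involution_iff (M : Matrix (Fin 3) (Fin 3) ℝ)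
    (horth : Mᵀ * M = 1) (hdet : M.det = 1) (hne : M ≠ 1) :
    M ^ 2 = 1 ↔
      ∃ a₂ b₁ b₂ : ℝ, a₂^2 + b₁^2 + b₂^2 = 1 ∧
        M = !![a₂^2 - b₁^2 - b₂^2, 2*a₂*b₁, 2*a₂*b₂;
               2*a₂*b₁, -a₂^2 + b₁^2 - b₂^2, 2*b₁*b₂;
               2*a₂*b₂, 2*b₂*b₁, -a₂^2 - b₁^2 + b₂^2] := by
  constructor
  · intro hsq
    obtain ⟨v, hv, rfl⟩ := exists_eq_halfTurn_of_sq_eq_one horth hdet hsq hne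
    have hv3 : v = ![v 0, v 1, v 2] := by ext i; fin_cases i <;> rfl
    have hunit : v 0 ^ 2 + v 1 ^ 2 + v 2 ^ 2 = 1 := by
      simpa [dotProduct, Fin.sum_univ_three, sq] using hv
    exact ⟨v 0, v 1, v 2, hunit, (congrArg halfTurn hv3).trans (halfTurn_fin_three hunit)⟩
  · rintro ⟨x, y, z, hunit, rfl⟩
    rw [← halfTurn_fin_three hunit]
    exact halfTurn_sq (by simpa [dotProduct, Fin.sum_univ_three, sq] using hunit)
end
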